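/- If f is a small oracle, then there exists a constant c and a single fixed value i₀ < c such that for every k there exists n ≥ k for which at least ⌈k/c⌉ of the values in f(n) equal i₀ (i.e., the same popular value i₀ works for arbitrarily large k). -/

import Mathlib

/-- A scalar oracle is represented as `f : ℕ → ℕ → ℕ`, where `f n k` is the
`k`-th smallest label `f_k^{(n)}` on input `n` (meaningful for `1 ≤ k ≤ n`). -/
def IsLarge (f : ℕ → ℕ → ℕ) : Prop :=
  ∀ c > 0, ∃ k ≥ 1, ∀ n ≥ k, f n k ≥ c

/-!
Smallness gives `c > 0` such that every `k` has some `n ≥ k` with `f_k^{(n)} < c`; by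
monotonicity the first `k` labels of `f(n)` then lie below `c`, so by pigeonhole one of them,
`i_k`, occurs at least `⌈k/c⌉` times. The property "some `n ≥ k` has at least `⌈k/c⌉` copies
of `i`" is antitone in `k`, so if every `i < c` failed it from some point on, all would fail
beyond the largest of these finitely many points, contradicting the existence of `i_k` there.
-/

open Finset Filter

theorem Finset.exists_ceil_div_le_card_fiber_of_maps_to {α β : Type*} [DecidableEq β]
    {s : Finset α} {t : Finset β} {f : α → β} (hf : ∀ a ∈ s, f a ∈ t) (ht : t.Nonempty) :
    ∃ y ∈ t, (#s + #t - 1) / #t ≤ #{x ∈ s | f x = y} := by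
  have hqt := Nat.div_mul_le_self (#s + #t - 1) #t
  generalize (#s + #t - 1) / #t = q at hqt ⊢
  rcases Nat.eq_zero_or_pos q with rfl | hq
  · obtain ⟨y, hy⟩ := ht
    exact ⟨y, hy, Nat.zero_le _⟩
  have hlt : #t * (q - 1) < #s := by
    rw [Nat.mul_sub_one, Nat.mul_comm]
    have : #t ≤ q * #t := Nat.le_mul_of_pos_left _ hq
    have := ht.card_pos
    omega
  obtain ⟨y, hy, hcard⟩ := exists_lt_card_fiber_of_mul_lt_card_of_maps_to hf hlt
  exact ⟨y, hy, by omega⟩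

theorem exists_ceil_div_le_card_filter_eq {g : ℕ → ℕ} {c k n : ℕ} (hc : 0 < c) (hkn : k ≤ n)
    (hg : ∀ j ∈ Icc 1 k, g j < c) :
    ∃ i < c, (k + c - 1) / c ≤ #{j ∈ Icc 1 n | g j = i} := by
  obtain ⟨i, hi, hcount⟩ := exists_ceil_div_le_card_fiber_of_maps_to
    (t := range c) (fun j hj => mem_range.2 (hg j hj)) (nonempty_range_iff.2 hc.ne')
  simp only [Nat.card_Icc, Nat.add_sub_cancel, card_range] at hcount
  refine ⟨i, mem_range.1 hi, hcount.trans (card_le_card ?_)⟩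
  exact filter_subset_filter _ (Icc_subset_Icc_right hkn)

theorem Finset.exists_forall_of_forall_exists_of_antitone {ι α : Type*} [SemilatticeSup α]
    [Nonempty α] {s : Finset ι} {P : α → ι → Prop} (hP : ∀ i, Antitone (P · i))
    (h : ∀ k, ∃ i ∈ s, P k i) : ∃ i ∈ s, ∀ k, P k i := by
  by_contra! hfail
  have : ∀ᶠ k in atTop, ∀ i ∈ s, ¬P k i := by
    refine eventually_all_finset s |>.2 fun i hi => ?_
    obtain ⟨k₀, hk₀⟩ := hfail i hi
    exact eventually_atTop.2 ⟨k₀, fun k hk hPk => hk₀ (hP i hk hPk)⟩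
  obtain ⟨k, hk⟩ := this.exists
  obtain ⟨i, hi, hPk⟩ := h k
  exact hk i hi hPk

theorem small_oracle_fixed_popular_value (f : ℕ → ℕ → ℕ)
    (hmono : ∀ n, ∀ i j, 1 ≤ i → i ≤ j → j ≤ n → f n i ≤ f n j)
    (hf : ¬ IsLarge f) :
    ∃ c ≥ 1, ∃ i₀ < c, ∀ k ≥ 1, ∃ n ≥ k,
      (k + c - 1) / c ≤ ((Finset.Icc 1 n).filter (fun j => f n j = i₀)).card := by
  obtain ⟨c, hc, hsmall⟩ : ∃ c > 0, ∀ k ≥ 1, ∃ n ≥ k, f n k < c := by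
    simpa [IsLarge] using hf
  refine ⟨c, hc, ?_⟩
  have popular : ∀ k, ∃ i ∈ range c, ∃ n ≥ k, (k + c - 1) / c ≤ #{j ∈ Icc 1 n | f n j = i} := by
    intro k
    rcases Nat.eq_zero_or_pos k with rfl | hk
    · exact ⟨0, mem_range.2 hc, 0, le_rfl, by simp [Nat.div_eq_of_lt (Nat.sub_one_lt hc.ne')]⟩
    obtain ⟨n, hkn, hfn⟩ := hsmall k hk
    obtain ⟨i, hi, hcount⟩ := exists_ceil_div_le_card_filter_eq hc hkn fun j hj =>
      (hmono n j k (mem_Icc.1 hj).1 (mem_Icc.1 hj).2 hkn).trans_lt hfn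
    exact ⟨i, mem_range.2 hi, n, hkn, hcount⟩
  have antitone (i : ℕ) : Antitone fun k => ∃ n ≥ k, (k + c - 1) / c ≤ #{j ∈ Icc 1 n | f n j = i} :=
    fun k k' hkk' ⟨n, hn, hcount⟩ =>
      ⟨n, hkk'.trans hn, (Nat.div_le_div_right (by omega)).trans hcount⟩
  obtain ⟨i₀, hi₀, hall⟩ := exists_forall_of_forall_exists_of_antitone antitone popular
  exact ⟨i₀, mem_range.1 hi₀, fun k _ => hall k⟩
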